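/- For every integer n ≥ 1 and every λ > 0, one has the identity λ φ₀'(λ) − φ₀(λ) = ∑_{j=1}^∞ (2j−1) b_j λ^{2j} − 1; consequently there exists exactly one positive real number λ₀ satisfying λ₀ φ₀'(λ₀) = φ₀(λ₀). -/

import Mathlib

open Real Filter

noncomputable def b (n : ℕ) (j : ℕ) : ℝ :=
  ∏ ℓ ∈ Finset.Icc 1 j, 1 / (2 * (ℓ : ℝ) * ((n : ℝ) + 2 * ((ℓ : ℝ) - 1)))

noncomputable def phi0 (n : ℕ) (ρ : ℝ) : ℝ := ∑' j : ℕ, b n j * ρ ^ (2 * j)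

/-!
Write `φ₀(ρ) = g(ρ²)` with `g(t) = ∑ bⱼ tʲ`, an entire power series (`bⱼ ≤ 1/j!`). Termwise
differentiation gives `ρ φ₀'(ρ) - φ₀(ρ) = ψ(ρ²)` with `ψ(t) = ∑ (2j - 1) bⱼ tʲ`. Apart from the
constant term `-1`, all coefficients of `ψ` are positive, so `ψ` is continuous and strictly
increasing on `[0, ∞)`, with `ψ(0) = -1` and `ψ(2n) ≥ -1 + 2n b₁ = 0`. Hence `ψ` has exactly one
positive zero `t₀`, and `λ₀ = √t₀`.
-/

section EntireSeries

variable {a : ℕ → ℝ}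

lemma summable_mul_pow_of_summable_abs_mul_pow (ha : ∀ r, Summable fun j : ℕ => |a j| * r ^ j)
    (x : ℝ) : Summable fun j : ℕ => a j * x ^ j :=
  .of_norm <| by simpa [abs_mul, abs_pow] using ha |x|

/-- Since `j ≤ 2 ^ j`, summability at `2 * |r|` controls the differentiated series at `r`. -/
lemma summable_abs_natCast_mul_mul_pow (ha : ∀ r, Summable fun j : ℕ => |a j| * r ^ j) (r : ℝ) :
    Summable fun j : ℕ => |(j : ℝ) * a j| * r ^ j := by
  refine .of_norm_bounded (ha (2 * |r|)) fun j => ?_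
  have hj : (j : ℝ) ≤ 2 ^ j := by exact_mod_cast Nat.lt_two_pow_self.le
  rw [Real.norm_eq_abs, abs_mul, abs_abs, abs_mul, Nat.abs_cast, abs_pow, mul_pow]
  have := mul_le_mul_of_nonneg_right hj
    (mul_nonneg (abs_nonneg (a j)) (pow_nonneg (abs_nonneg r) j))
  linarith

lemma hasDerivAt_tsum_mul_pow (ha : ∀ r, Summable fun j : ℕ => |a j| * r ^ j) (x : ℝ) :
    HasDerivAt (fun y => ∑' j, a j * y ^ j) (∑' j : ℕ, a j * (j * x ^ (j - 1))) x := by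
  set R := |x| + 1
  have hR : 1 ≤ R := le_add_of_nonneg_left (abs_nonneg x)
  refine hasDerivAt_tsum_of_isPreconnected (summable_abs_natCast_mul_mul_pow ha R)
    Metric.isOpen_ball (convex_ball 0 R).isPreconnected
    (fun j y _ => (hasDerivAt_pow j y).const_mul (a j)) (fun j y hy => ?_)
    (Metric.mem_ball_self (by linarith)) (summable_mul_pow_of_summable_abs_mul_pow ha 0)
    (show x ∈ Metric.ball 0 R by simp [R])
  have hy : |y| ≤ R := by simpa using (Metric.mem_ball.1 hy).le
  calc ‖a j * (j * y ^ (j - 1))‖ = |(j : ℝ) * a j| * |y| ^ (j - 1) := by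
        rw [Real.norm_eq_abs, abs_mul, abs_mul, abs_pow, abs_mul]; ring
    _ ≤ |(j : ℝ) * a j| * R ^ j := by
        gcongr
        exact (pow_le_pow_left₀ (abs_nonneg y) hy _).trans
          (pow_le_pow_right₀ hR (Nat.sub_le j 1))

lemma continuous_tsum_mul_pow (ha : ∀ r, Summable fun j : ℕ => |a j| * r ^ j) :
    Continuous fun y => ∑' j, a j * y ^ j :=
  continuous_iff_continuousAt.2 fun x => (hasDerivAt_tsum_mul_pow ha x).continuousAt

lemma mul_tsum_mul_natCast_mul_pow_sub_one (a : ℕ → ℝ) (x : ℝ) :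
    x * ∑' j : ℕ, a j * (j * x ^ (j - 1)) = ∑' j : ℕ, j * a j * x ^ j := by
  rw [← tsum_mul_left]
  congr 1 with (_ | j)
  · simp
  · simp only [Nat.add_sub_cancel, pow_succ]; ring

end EntireSeries

section Coefficients

variable {n : ℕ}

lemma b_zero (n : ℕ) : b n 0 = 1 := by simp [b]

lemma b_succ (n j : ℕ) : b n (j + 1) = b n j / (2 * (j + 1) * (n + 2 * j)) := by
  rw [b, Finset.prod_Icc_succ_top (Nat.le_add_left 1 j), ← b]
  push_cast
  ring

lemma b_one (n : ℕ) : b n 1 = 1 / (2 * n) := by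
  simp [b_succ, b_zero]

lemma b_pos (hn : 1 ≤ n) (j : ℕ) : 0 < b n j := by
  induction j with
  | zero => simp [b_zero]
  | succ j ih =>
    have : (1 : ℝ) ≤ n := by exact_mod_cast hn
    rw [b_succ]
    positivity

lemma b_le_inv_factorial (hn : 1 ≤ n) (j : ℕ) : b n j ≤ (j.factorial : ℝ)⁻¹ := by
  induction j with
  | zero => simp [b_zero]
  | succ j ih =>
    have : (1 : ℝ) ≤ n := by exact_mod_cast hn
    have hj : (0 : ℝ) ≤ j := j.cast_nonneg
    rw [b_succ, Nat.factorial_succ, Nat.cast_mul, mul_inv, div_eq_mul_inv, mul_comm]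
    gcongr
    · exact (b_pos hn j).le
    · push_cast; nlinarith

lemma summable_abs_b_mul_pow (hn : 1 ≤ n) (r : ℝ) : Summable fun j : ℕ => |b n j| * r ^ j := by
  refine .of_norm_bounded (Real.summable_pow_div_factorial |r|) fun j => ?_
  rw [Real.norm_eq_abs, abs_mul, abs_abs, abs_pow, abs_of_pos (b_pos hn j), div_eq_inv_mul]
  gcongr
  exact b_le_inv_factorial hn j

end Coefficients

section Phi0

variable {n : ℕ}

lemma phi0_eq_comp_sq (n : ℕ) :
    phi0 n = (fun t => ∑' j : ℕ, b n j * t ^ j) ∘ fun ρ => ρ ^ 2 := by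
  ext ρ
  simp [phi0, pow_mul]

lemma mul_deriv_phi0 (hn : 1 ≤ n) (ρ : ℝ) :
    ρ * deriv (phi0 n) ρ = 2 * ∑' j : ℕ, j * b n j * (ρ ^ 2) ^ j := by
  rw [phi0_eq_comp_sq, ((hasDerivAt_tsum_mul_pow (summable_abs_b_mul_pow hn) (ρ ^ 2)).comp ρ
    (hasDerivAt_pow 2 ρ)).deriv, ← mul_tsum_mul_natCast_mul_pow_sub_one]
  ring

/-- In the variable `t = ρ ^ 2`, `psi n t = ρ φ₀'(ρ) - φ₀(ρ)`. -/
noncomputable def psi (n : ℕ) (t : ℝ) : ℝ := ∑' j : ℕ, (2 * (j : ℝ) - 1) * b n j * t ^ j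

lemma summable_abs_psi_coeff_mul_pow (hn : 1 ≤ n) (r : ℝ) :
    Summable fun j : ℕ => |(2 * (j : ℝ) - 1) * b n j| * r ^ j := by
  have hb' := summable_abs_b_mul_pow hn
  refine .of_norm_bounded
    (((summable_abs_natCast_mul_mul_pow hb' |r|).mul_left 2).add (hb' |r|)) fun j => ?_
  have hb := b_pos hn j
  have hj : (0 : ℝ) ≤ j := j.cast_nonneg
  rw [Real.norm_eq_abs, abs_mul, abs_abs, abs_pow, abs_mul, abs_mul, Nat.abs_cast, abs_of_pos hb]
  have : |2 * (j : ℝ) - 1| ≤ 2 * j + 1 := abs_le.2 ⟨by linarith, by linarith⟩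
  have := mul_le_mul_of_nonneg_right this (mul_nonneg hb.le (pow_nonneg (abs_nonneg r) j))
  linarith

lemma summable_psi_coeff_mul_pow (hn : 1 ≤ n) (t : ℝ) :
    Summable fun j : ℕ => (2 * (j : ℝ) - 1) * b n j * t ^ j :=
  summable_mul_pow_of_summable_abs_mul_pow (summable_abs_psi_coeff_mul_pow hn) t

lemma mul_deriv_phi0_sub_phi0 (hn : 1 ≤ n) (ρ : ℝ) :
    ρ * deriv (phi0 n) ρ - phi0 n ρ = psi n (ρ ^ 2) := by
  have hphi : phi0 n ρ = ∑' j : ℕ, b n j * (ρ ^ 2) ^ j := by simp [phi0, pow_mul]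
  rw [mul_deriv_phi0 hn, hphi, ← tsum_mul_left, ← Summable.tsum_sub, psi]
  · congr 1 with j; ring
  · exact (summable_mul_pow_of_summable_abs_mul_pow
      (summable_abs_natCast_mul_mul_pow (summable_abs_b_mul_pow hn)) _).mul_left 2
  · exact summable_mul_pow_of_summable_abs_mul_pow (summable_abs_b_mul_pow hn) _

lemma psi_sq_eq_tsum_succ_sub_one (hn : 1 ≤ n) (ρ : ℝ) :
    psi n (ρ ^ 2) =
      (∑' j : ℕ, (2 * ((j : ℝ) + 1) - 1) * b n (j + 1) * ρ ^ (2 * (j + 1))) - 1 := by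
  rw [psi, (summable_psi_coeff_mul_pow hn _).tsum_eq_zero_add]
  simp only [b_zero, pow_mul, Nat.cast_add, Nat.cast_one, CharP.cast_eq_zero, pow_zero]
  ring

lemma continuous_psi (hn : 1 ≤ n) : Continuous (psi n) :=
  continuous_tsum_mul_pow (summable_abs_psi_coeff_mul_pow hn)

lemma psi_zero (n : ℕ) : psi n 0 = -1 := by
  rw [psi, tsum_eq_single 0 fun j hj => by simp [hj]]
  simp [b_zero]

lemma strictMonoOn_psi (hn : 1 ≤ n) : StrictMonoOn (psi n) (Set.Ici 0) := by
  intro s hs t _ hst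
  refine Summable.tsum_lt_tsum (i := 1) (fun j => ?_) ?_
    (summable_psi_coeff_mul_pow hn s) (summable_psi_coeff_mul_pow hn t)
  · rcases j with _ | j
    · simp
    · have : (0 : ℝ) ≤ (2 * ((j + 1 : ℕ) : ℝ) - 1) * b n (j + 1) :=
        mul_nonneg (by push_cast; linarith [j.cast_nonneg (α := ℝ)]) (b_pos hn _).le
      exact mul_le_mul_of_nonneg_left (pow_le_pow_left₀ hs hst.le _) this
  · simpa only [Nat.cast_one, pow_one, show (2 : ℝ) * 1 - 1 = 1 by norm_num, one_mul]
      using mul_lt_mul_of_pos_left hst (b_pos hn 1)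

lemma psi_two_mul_nonneg (hn : 1 ≤ n) : 0 ≤ psi n (2 * n) := by
  have hn' : (n : ℝ) ≠ 0 := by positivity
  calc (0 : ℝ) = ∑ j ∈ ({0, 1} : Finset ℕ), (2 * (j : ℝ) - 1) * b n j * (2 * n) ^ j := by
        rw [Finset.sum_pair zero_ne_one, b_zero, b_one]
        field_simp
        norm_num
    _ ≤ psi n (2 * n) := by
        refine (summable_psi_coeff_mul_pow hn _).sum_le_tsum _ fun j hj => ?_
        have : (2 : ℝ) ≤ j := by
          simp only [Finset.mem_insert, Finset.mem_singleton, not_or] at hj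
          exact_mod_cast (by omega : 2 ≤ j)
        have := b_pos hn j
        have : (0 : ℝ) ≤ 2 * j - 1 := by linarith
        positivity

lemma exists_pos_psi_eq_zero (hn : 1 ≤ n) : ∃ t, 0 < t ∧ psi n t = 0 := by
  obtain ⟨t, ht, hψ⟩ := intermediate_value_Icc (by positivity) (continuous_psi hn).continuousOn
    ⟨(psi_zero n).le.trans (by norm_num), psi_two_mul_nonneg hn⟩
  refine ⟨t, ht.1.lt_of_ne ?_, hψ⟩
  rintro rfl
  simp [psi_zero] at hψ

end Phi0

theorem stmt3 (n : ℕ) (hn : 1 ≤ n) :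
    (∀ l : ℝ, 0 < l →
      l * deriv (phi0 n) l - phi0 n l =
        (∑' j : ℕ, (2 * ((j : ℝ) + 1) - 1) * b n (j + 1) * l ^ (2 * (j + 1))) - 1) ∧
    (∃! l : ℝ, 0 < l ∧ l * deriv (phi0 n) l = phi0 n l) := by
  have fixed_iff (l : ℝ) : l * deriv (phi0 n) l = phi0 n l ↔ psi n (l ^ 2) = 0 := by
    rw [← mul_deriv_phi0_sub_phi0 hn, sub_eq_zero]
  refine ⟨fun l _ => by rw [mul_deriv_phi0_sub_phi0 hn, psi_sq_eq_tsum_succ_sub_one hn], ?_⟩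
  obtain ⟨t, ht, hψ⟩ := exists_pos_psi_eq_zero hn
  refine ⟨√t, ⟨sqrt_pos.2 ht, (fixed_iff _).2 (by rwa [sq_sqrt ht.le])⟩, ?_⟩
  rintro l ⟨hl, hl'⟩
  have : l ^ 2 = t :=
    (strictMonoOn_psi hn).injOn (sq_nonneg l) ht.le (((fixed_iff l).1 hl').trans hψ.symm)
  rw [← this, sqrt_sq hl.le]
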